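/- arXiv:2507.01708 — 2 statements merged into one kernel-verified Lean document; each statement's English description precedes it below -/
import Mathlib

section
/- Let p ∈ [0,1], α ∈ [0,1], and (α_n) a sequence in [0,1] with α_n → α. Define ℓ_1 = 1 and ℓ_n := ∏_{k=1}^{n-1} (1 + (2p-1)(α_{k+1} - α)/(k + (2p-1)α)) for n ≥ 2, and ρ_n := exp(∑_{k=2}^{n-1} (2p-1)(α_{k+1} - α)/k) for n ≥ 3. Then there exists a constant C > 0 such that ℓ_n / ρ_n → C as n → ∞. Consequently, (ℓ_n) is a slowly varying sequence. -/
/-!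
Write `b k = (2p-1)(a (k+1) - α) → 0` and `β = (2p-1)α`, so that the factors of `ℓ` are
`1 + x k` with `x k = b k / (k + β) = O(1/k)`. Then
`log (1 + x k) - b k / k = (log (1 + x k) - x k) + (x k - b k / k) = O(x k ^ 2) + O(1/k^2)`
is summable, hence `log ℓ n - log ρ n` converges and `ℓ n / ρ n → C > 0`.
Slow variation of `ℓ` thus reduces to that of `ρ`: `log ρ ⌊x t⌋₊ - log ρ ⌊x⌋₊` is a sum of
`O(x)` terms `b k / k` with `k ≍ x`, and `b k → 0`.
-/

open Filter Real Topology Asymptotics Finset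

lemma Finset.Icc_sub_one_right_eq_Ico_of_one_le {m : ℕ} (hm : 1 ≤ m) (n : ℕ) :
    Icc m (n - 1) = Ico m n := by
  ext k; simp only [mem_Icc, mem_Ico]; omega

lemma Real.log_one_add_sub_self_isBigO :
    (fun x : ℝ => log (1 + x) - x) =O[𝓝 0] fun x => x ^ 2 := by
  refine IsBigO.of_bound 2 ?_
  filter_upwards [Metric.ball_mem_nhds (0 : ℝ) one_half_pos] with x hx
  rw [Metric.mem_ball, dist_zero_right, norm_eq_abs] at hx
  have h := Real.abs_log_sub_add_sum_range_le (x := -x) (by rw [abs_neg]; linarith) 1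
  rw [abs_neg, sum_range_one, sub_neg_eq_add] at h
  rw [norm_eq_abs, norm_eq_abs, abs_pow]
  calc |log (1 + x) - x| ≤ |x| ^ 2 / (1 - |x|) := by simpa [neg_add_eq_sub] using h
    _ ≤ 2 * |x| ^ 2 := by
      rw [div_le_iff₀ (by linarith)]; nlinarith [sq_nonneg x, abs_nonneg x]

lemma isBigO_natCast_add_inv (β : ℝ) :
    (fun k : ℕ => ((k : ℝ) + β)⁻¹) =O[atTop] fun k => (k : ℝ)⁻¹ := by
  have hk : Tendsto (fun k : ℕ => (k : ℝ)) atTop atTop := tendsto_natCast_atTop_atTop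
  have h : (fun k : ℕ => (k : ℝ) + β) ~[atTop] fun k => (k : ℝ) :=
    IsEquivalent.refl.add_isLittleO ((isLittleO_const_id_atTop β).comp_tendsto hk)
  exact h.inv.isBigO

lemma summable_log_one_add_div_sub_div {b : ℕ → ℝ} (hb : b =O[atTop] fun _ => (1 : ℝ))
    (β : ℝ) : Summable fun k : ℕ => log (1 + b k / (k + β)) - b k / k := by
  set x : ℕ → ℝ := fun k => b k / (k + β)
  have hx : x =O[atTop] fun k => (k : ℝ)⁻¹ := by
    simpa [x, div_eq_mul_inv] using hb.mul (isBigO_natCast_add_inv β)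
  have hlog : (fun k => log (1 + x k) - x k) =O[atTop] fun k => ((k : ℝ)⁻¹) ^ 2 :=
    (Real.log_one_add_sub_self_isBigO.comp_tendsto
      (hx.trans_tendsto tendsto_inv_atTop_nhds_zero_nat)).trans (hx.pow 2)
  have hdiff : (fun k : ℕ => x k - b k / k) =O[atTop] fun k => ((k : ℝ)⁻¹) ^ 2 := by
    have h : (fun k : ℕ => -β * b k * ((k : ℝ) + β)⁻¹ * (k : ℝ)⁻¹) =O[atTop]
        fun k => ((k : ℝ)⁻¹) ^ 2 := by
      simpa [sq] using ((isBigO_const_mul_self (-β) b atTop).trans hb).mul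
        (isBigO_natCast_add_inv β) |>.mul (isBigO_refl _ _)
    refine h.congr' ?_ EventuallyEq.rfl
    filter_upwards [eventually_gt_atTop 0,
      tendsto_natCast_atTop_atTop.eventually_gt_atTop (-β)] with k hk hkβ
    have : (k : ℝ) + β ≠ 0 := by linarith
    have : (k : ℝ) ≠ 0 := by positivity
    simp only [x]
    field_simp
    ring
  refine summable_of_isBigO_nat ?_ (by simpa [x] using hlog.add hdiff)
  simpa only [inv_pow] using Real.summable_nat_pow_inv.mpr one_lt_two

lemma exists_pos_tendsto_prod_div_exp_sum {x y : ℕ → ℝ} {m : ℕ}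
    (hx : ∀ k, m ≤ k → 0 < 1 + x k) (hs : Summable fun k => log (1 + x k) - y k) :
    ∃ C > 0, Tendsto (fun n => (∏ k ∈ Ico m n, (1 + x k)) / exp (∑ k ∈ Ico m n, y k))
      atTop (𝓝 C) := by
  set h : ℕ → ℝ := fun k => log (1 + x k) - y k
  refine ⟨exp (∑' k, h k - ∑ k ∈ range m, h k), exp_pos _, ?_⟩
  have hsum := (hs.hasSum.tendsto_sum_nat.sub_const (∑ k ∈ range m, h k))
  refine ((continuous_exp.tendsto _).comp hsum).congr' ?_
  filter_upwards [eventually_ge_atTop m] with n hn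
  have hprod : ∏ k ∈ Ico m n, (1 + x k) = exp (∑ k ∈ Ico m n, log (1 + x k)) := by
    rw [exp_sum]
    exact prod_congr rfl fun k hk => (exp_log (hx k (mem_Ico.1 hk).1)).symm
  rw [Function.comp_apply, ← sum_Ico_eq_sub _ hn, hprod, ← exp_sub, ← sum_sub_distrib]

lemma abs_sum_range_div_sub_le {c : ℕ → ℝ} {δ R : ℝ} {m M : ℕ} (hm : 0 < m) (hmM : m ≤ M)
    (hMm : (M : ℝ) ≤ R * m) (hc : ∀ k, m ≤ k → |c k| ≤ δ) :
    |∑ k ∈ range M, c k / k - ∑ k ∈ range m, c k / k| ≤ δ * R := by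
  have hm' : (0 : ℝ) < m := by exact_mod_cast hm
  have hterm : ∀ k ∈ Ico m M, |c k / k| ≤ δ / m := by
    intro k hk
    have hmk : (m : ℝ) ≤ k := by exact_mod_cast (mem_Ico.1 hk).1
    rw [abs_div, Nat.abs_cast]
    exact div_le_div₀ ((abs_nonneg _).trans (hc m le_rfl)) (hc k (mem_Ico.1 hk).1) hm' hmk
  have hcard : ((M - m : ℕ) : ℝ) ≤ R * m := by
    rw [Nat.cast_sub hmM]; linarith
  calc |∑ k ∈ range M, c k / k - ∑ k ∈ range m, c k / k|
      = |∑ k ∈ Ico m M, c k / k| := by rw [sum_Ico_eq_sub _ hmM]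
    _ ≤ ∑ k ∈ Ico m M, |c k / k| := abs_sum_le_sum_abs _ _
    _ ≤ (M - m : ℕ) * (δ / m) := by
      simpa only [Nat.card_Ico, nsmul_eq_mul] using sum_le_card_nsmul _ _ _ hterm
    _ ≤ R * m * (δ / m) :=
      mul_le_mul_of_nonneg_right hcard (div_nonneg ((abs_nonneg _).trans (hc m le_rfl)) hm'.le)
    _ = δ * R := by field_simp

lemma tendsto_sum_range_div_comp_sub {ι : Type*} {l : Filter ι} {c : ℕ → ℝ}
    (hc : Tendsto c atTop (𝓝 0)) {f g : ι → ℕ} (hf : Tendsto f l atTop)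
    (hg : Tendsto g l atTop) (hfg : (fun i => (f i : ℝ)) =Θ[l] fun i => (g i : ℝ)) :
    Tendsto (fun i => ∑ k ∈ range (f i), c k / k - ∑ k ∈ range (g i), c k / k) l (𝓝 0) := by
  obtain ⟨R, hR, hRfg⟩ := hfg.isBigO.exists_pos
  obtain ⟨R', hR', hRgf⟩ := hfg.symm.isBigO.exists_pos
  rw [Metric.tendsto_nhds]
  intro ε hε
  obtain ⟨N, hN⟩ := eventually_atTop.1
    ((Metric.tendsto_nhds.1 hc) (ε / (2 * max R R')) (by positivity))
  filter_upwards [hRfg.bound, hRgf.bound, hf.eventually_ge_atTop (N + 1),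
    hg.eventually_ge_atTop (N + 1)] with i hfi hgi hNf hNg
  simp only [norm_natCast] at hfi hgi
  have hsmall : ∀ k, N ≤ k → |c k| ≤ ε / (2 * max R R') := fun k hk => by
    simpa using (hN k hk).le
  rw [dist_zero_right, norm_eq_abs]
  refine lt_of_le_of_lt ?_ (half_lt_self hε)
  have hhalf : ε / (2 * max R R') * max R R' = ε / 2 := by field_simp
  rcases le_total (g i) (f i) with hle | hle
  · rw [← hhalf]
    exact abs_sum_range_div_sub_le (by omega) hle (hfi.trans (by gcongr; exact le_max_left _ _))
      fun k hk => hsmall k (by omega)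
  · rw [abs_sub_comm, ← hhalf]
    exact abs_sum_range_div_sub_le (by omega) hle (hgi.trans (by gcongr; exact le_max_right _ _))
      fun k hk => hsmall k (by omega)

lemma isTheta_nat_floor_mul {t : ℝ} (ht : 0 < t) :
    (fun x : ℝ => (⌊x * t⌋₊ : ℝ)) =Θ[atTop] fun x => (⌊x⌋₊ : ℝ) := by
  have h : (fun x : ℝ => (⌊x * t⌋₊ : ℝ)) ~[atTop] fun x => x * t :=
    isEquivalent_nat_floor.comp_tendsto (tendsto_id.atTop_mul_const ht)
  refine h.isTheta.trans (IsTheta.trans ?_ isEquivalent_nat_floor.isTheta_symm)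
  simpa only [mul_comm _ t] using (isTheta_const_mul_left ht.ne').2 (isTheta_refl _ _)

lemma tendsto_exp_sum_Ico_div_floor_mul_div {c : ℕ → ℝ} (hc : Tendsto c atTop (𝓝 0)) (m : ℕ)
    {t : ℝ} (ht : 0 < t) :
    Tendsto (fun x : ℝ => exp (∑ k ∈ Ico m ⌊x * t⌋₊, c k / k) / exp (∑ k ∈ Ico m ⌊x⌋₊, c k / k))
      atTop (𝓝 1) := by
  have hf : Tendsto (fun x : ℝ => ⌊x * t⌋₊) atTop atTop :=
    tendsto_nat_floor_atTop.comp (tendsto_id.atTop_mul_const ht)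
  have h := (continuous_exp.tendsto 0).comp
    (tendsto_sum_range_div_comp_sub hc hf tendsto_nat_floor_atTop (isTheta_nat_floor_mul ht))
  rw [exp_zero] at h
  refine h.congr' ?_
  filter_upwards [hf.eventually_ge_atTop m, tendsto_nat_floor_atTop.eventually_ge_atTop m]
    with x hfx hgx
  rw [Function.comp_apply, sum_Ico_eq_sub _ hfx, sum_Ico_eq_sub _ hgx, ← exp_sub,
    sub_sub_sub_cancel_right]

lemma tendsto_div_comp_of_tendsto_div {ι : Type*} {l : Filter ι} {ℓ ρ : ℕ → ℝ} {C : ℝ}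
    (hC : C ≠ 0) (hℓρ : Tendsto (fun n => ℓ n / ρ n) atTop (𝓝 C)) (hρ : ∀ n, ρ n ≠ 0)
    {f g : ι → ℕ} (hf : Tendsto f l atTop) (hg : Tendsto g l atTop)
    (hρfg : Tendsto (fun i => ρ (f i) / ρ (g i)) l (𝓝 1)) :
    Tendsto (fun i => ℓ (f i) / ℓ (g i)) l (𝓝 1) := by
  have h := ((hℓρ.comp hf).div (hℓρ.comp hg) hC).mul hρfg
  rw [div_self hC, one_mul] at h
  refine h.congr fun i => ?_
  have := hρ (f i)
  have := hρ (g i)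
  simp only [Pi.div_apply, Function.comp_apply]
  rcases eq_or_ne (ℓ (g i)) 0 with h0 | h0
  · simp [h0]
  · field_simp

theorem stmt_2_general (p α : ℝ)
    (a : ℕ → ℝ)
    (haconv : Tendsto a atTop (nhds α))
    (ℓ ρ : ℕ → ℝ)
    (hℓ : ∀ n, ℓ n = ∏ k ∈ Finset.Icc 1 (n-1),
      (1 + (2*p-1) * (a (k+1) - α) / ((k:ℝ) + (2*p-1)*α)))
    (hpos : ∀ k : ℕ, 1 ≤ k → 0 < 1 + (2*p-1) * (a (k+1) - α) / ((k:ℝ) + (2*p-1)*α))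
    (hρ : ∀ n, ρ n = Real.exp (∑ k ∈ Finset.Icc 2 (n-1),
      (2*p-1) * (a (k+1) - α) / (k:ℝ))) :
    (∃ C > (0:ℝ), Tendsto (fun n => ℓ n / ρ n) atTop (nhds C)) ∧
    (∀ t > (0:ℝ), Tendsto (fun x : ℝ => ℓ ⌊x*t⌋₊ / ℓ ⌊x⌋₊) atTop (nhds 1)) := by
  set β := (2*p-1)*α
  set b : ℕ → ℝ := fun k => (2*p-1) * (a (k+1) - α)
  have hℓ' (n : ℕ) : ℓ n = ∏ k ∈ Ico 1 n, (1 + b k / (k + β)) := by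
    rw [hℓ, Icc_sub_one_right_eq_Ico_of_one_le le_rfl]
  have hρ' (n : ℕ) : ρ n = exp (∑ k ∈ Ico 2 n, b k / k) := by
    rw [hρ, Icc_sub_one_right_eq_Ico_of_one_le one_le_two]
  have hpos' : ∀ k, 1 ≤ k → 0 < 1 + b k / (k + β) := hpos
  have hb : Tendsto b atTop (𝓝 0) := by
    have := ((haconv.comp (tendsto_add_atTop_nat 1)).sub_const α).const_mul (2*p-1)
    rwa [sub_self, mul_zero] at this
  obtain ⟨C, hC, hlim⟩ := exists_pos_tendsto_prod_div_exp_sum (m := 2)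
    (fun k hk => hpos' k (by omega)) (summable_log_one_add_div_sub_div (hb.isBigO_one ℝ) β)
  have hratio : Tendsto (fun n => ℓ n / ρ n) atTop (𝓝 ((1 + b 1 / (1 + β)) * C)) := by
    refine (hlim.const_mul _).congr' ?_
    filter_upwards [eventually_ge_atTop 2] with n hn
    rw [hℓ', hρ', prod_eq_prod_Ico_succ_bot hn, Nat.cast_one]
    exact (mul_div_assoc _ _ _).symm
  have hC₁ : 0 < (1 + b 1 / (1 + β)) * C := mul_pos (by exact_mod_cast hpos' 1 le_rfl) hC
  refine ⟨⟨_, hC₁, hratio⟩, fun t ht => ?_⟩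
  refine tendsto_div_comp_of_tendsto_div hC₁.ne' hratio (fun n => by rw [hρ']; positivity)
    (tendsto_nat_floor_atTop.comp (tendsto_id.atTop_mul_const ht)) tendsto_nat_floor_atTop ?_
  simpa only [hρ'] using tendsto_exp_sum_Ico_div_floor_mul_div hb 2 ht

/-- ℓ_n / ρ_n → C for some C > 0; consequently (ℓ_n) is slowly varying. -/
theorem stmt_2 (p α : ℝ) (hp : p ∈ Set.Icc (0:ℝ) 1) (hα : α ∈ Set.Icc (0:ℝ) 1)
    (a : ℕ → ℝ) (ha : ∀ n, a n ∈ Set.Icc (0:ℝ) 1)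
    (haconv : Tendsto a atTop (nhds α))
    (ℓ ρ : ℕ → ℝ)
    (hℓ : ∀ n, ℓ n = ∏ k ∈ Finset.Icc 1 (n-1),
      (1 + (2*p-1) * (a (k+1) - α) / ((k:ℝ) + (2*p-1)*α)))
    (hpos : ∀ k : ℕ, 1 ≤ k → 0 < 1 + (2*p-1) * (a (k+1) - α) / ((k:ℝ) + (2*p-1)*α))
    (hρ : ∀ n, ρ n = Real.exp (∑ k ∈ Finset.Icc 2 (n-1),
      (2*p-1) * (a (k+1) - α) / (k:ℝ))) :
    (∃ C > (0:ℝ), Tendsto (fun n => ℓ n / ρ n) atTop (nhds C)) ∧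
    (∀ t > (0:ℝ), Tendsto (fun x : ℝ => ℓ ⌊x*t⌋₊ / ℓ ⌊x⌋₊) atTop (nhds 1)) :=
  stmt_2_general p α a haconv ℓ ρ hℓ hpos hρ
end

section
/- Let p ∈ [0,1], α ∈ [0,1] with α(2p-1) < 1/2, (α_k) a sequence in [0,1] with α_k → α, and a_n := ∏_{k=1}^{n-1}(1+(2p-1)α_{k+1}/k). Suppose A_n² ∼ C·Γ(α(2p-1)+1)²·n^{1-2α(2p-1)}·ℓ_n^{-2} with C > 0 and ℓ_n the slowly varying sequence ∏_{k=1}^{n-1}(1+(2p-1)(α_{k+1}-α)/(k+(2p-1)α)). Then for each fixed t > 0, a_{⌊nt⌋}·A_n ∼ √C · t^{α(2p-1)} · √n as n → ∞. -/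
/-!
Write `γ = α(2p-1)`. Each factor of `a` splits as `(1 + γ/k) f_k`, where `f_k` is the `k`-th
factor of `ℓ`, so `a_n = g_n ℓ_n` with `g_n = ∏_{k<n} (1 + γ/k)`, and Euler's limit formula for `Γ`
gives `g_n ∼ n^γ / Γ(γ+1)`. Since `k (f_k - 1) → 0`, also `k log f_k → 0`, so the sum of `log f_k`
over `k` between `n` and `⌊nt⌋` tends to `0`, i.e. `ℓ_{⌊nt⌋} ∼ ℓ_n`. Hence
`a_{⌊nt⌋} ∼ (nt)^γ ℓ_n / Γ(γ+1)`, while the hypothesis on `A` says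
`A_n ∼ √C Γ(γ+1) n^{1/2-γ} / ℓ_n`; in the product the factors `Γ(γ+1)` and `ℓ_n` cancel.
-/

open Filter Real Topology Asymptotics Finset
open scoped BigOperators Nat

lemma prod_Ico_one_add_div_mul_factorial (γ : ℝ) (n : ℕ) :
    (∏ k ∈ Ico 1 (n + 1), (1 + γ / k)) * n ! = ∏ j ∈ range n, (γ + 1 + j) := by
  rw [prod_Ico_eq_prod_range, Nat.add_sub_cancel, ← prod_range_add_one_eq_factorial,
    Nat.cast_prod, ← prod_mul_distrib]
  refine prod_congr rfl fun j _ => ?_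
  push_cast
  field_simp
  ring

lemma GammaSeq_add_one_eq (γ : ℝ) (n : ℕ) :
    GammaSeq (γ + 1) n = n ^ (γ + 1) / ((γ + 1 + n) * ∏ k ∈ Ico 1 (n + 1), (1 + γ / k)) := by
  rw [GammaSeq, prod_range_succ, ← prod_Ico_one_add_div_mul_factorial]
  have : (n ! : ℝ) ≠ 0 := by positivity
  field_simp

theorem isEquivalent_prod_Ico_one_add_div {γ : ℝ} (hγ : -1 < γ) :
    (fun n : ℕ => ∏ k ∈ Ico 1 n, (1 + γ / k)) ~[atTop] fun n => (n : ℝ) ^ γ / Gamma (γ + 1) := by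
  have hΓ : 0 < Gamma (γ + 1) := Gamma_pos_of_pos (by linarith)
  refine isEquivalent_of_tendsto_one ((tendsto_add_atTop_iff_nat 1).1 ?_)
  have hseq : Tendsto (fun n : ℕ => Gamma (γ + 1) / GammaSeq (γ + 1) n) atTop (𝓝 1) := by
    have := (tendsto_const_nhds (x := Gamma (γ + 1))).div (GammaSeq_tendsto_Gamma _) hΓ.ne'
    rwa [div_self hΓ.ne'] at this
  have hpow : Tendsto (fun n : ℕ => ((n : ℝ) / (n + 1)) ^ γ) atTop (𝓝 1) := by
    simpa using (tendsto_natCast_div_add_atTop (1 : ℝ)).rpow_const (p := γ) (Or.inl one_ne_zero)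
  have hlim := hseq.mul ((tendsto_natCast_div_add_atTop (γ + 1)).mul hpow)
  rw [mul_one, mul_one] at hlim
  refine hlim.congr' ?_
  filter_upwards [eventually_ge_atTop 1] with n hn
  have hn : (0 : ℝ) < n := by exact_mod_cast hn
  have hγn : (0 : ℝ) < n + (γ + 1) := by linarith
  rw [GammaSeq_add_one_eq, Pi.div_apply, div_rpow hn.le (by positivity), rpow_add_one hn.ne']
  push_cast
  field_simp
  ring

lemma tendsto_mul_log_of_tendsto_mul_sub_one {f : ℕ → ℝ} (hf : ∀ᶠ k in atTop, 0 < f k)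
    (h : Tendsto (fun k : ℕ => k * (f k - 1)) atTop (𝓝 0)) :
    Tendsto (fun k : ℕ => k * log (f k)) atTop (𝓝 0) := by
  have hf1 : Tendsto f atTop (𝓝 1) := by
    have := (h.div_atTop tendsto_natCast_atTop_atTop).const_add 1
    rw [add_zero] at this
    refine this.congr' ?_
    filter_upwards [eventually_ne_atTop 0] with k hk
    field_simp
    ring
  have hlower : Tendsto (fun k : ℕ => k * (1 - (f k)⁻¹)) atTop (𝓝 0) := by
    have := h.div hf1 one_ne_zero
    rw [zero_div] at this
    refine this.congr' ?_
    filter_upwards [hf] with k hk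
    simp only [Pi.div_apply]
    field_simp
  refine tendsto_of_tendsto_of_tendsto_of_le_of_le' hlower h ?_ ?_ <;>
    filter_upwards [hf] with k hk <;> gcongr
  exacts [one_sub_inv_le_log_of_pos hk, log_le_sub_one_of_pos hk]

lemma tendsto_sum_Ico_of_tendsto_mul {g : ℕ → ℝ} (hg : Tendsto (fun k : ℕ => k * g k) atTop (𝓝 0))
    {u v : ℕ → ℕ} (hu : Tendsto u atTop atTop) {c : ℝ} (hv : ∀ᶠ n in atTop, (v n : ℝ) ≤ c * u n) :
    Tendsto (fun n => ∑ k ∈ Ico (u n) (v n), g k) atTop (𝓝 0) := by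
  rw [Metric.tendsto_nhds]
  intro ε hε
  set δ := ε / (|c| + 1)
  have hδ : 0 < δ := by positivity
  obtain ⟨N, hN⟩ := eventually_atTop.1 ((Metric.tendsto_nhds.1 hg) δ hδ)
  filter_upwards [hv, hu.eventually (eventually_ge_atTop (max N 1))] with n hvn hun
  have hu0 : (0 : ℝ) < u n := by exact_mod_cast (le_max_right N 1).trans hun
  have hterm : ∀ k ∈ Ico (u n) (v n), |g k| ≤ δ / u n := fun k hk => by
    have hk : u n ≤ k := (mem_Ico.1 hk).1
    have hkN := hN k ((le_max_left N 1).trans (hun.trans hk))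
    rw [dist_zero_right, norm_mul, Real.norm_natCast, Real.norm_eq_abs] at hkN
    rw [le_div_iff₀ hu0]
    calc |g k| * u n ≤ k * |g k| := by rw [mul_comm]; gcongr
      _ ≤ δ := hkN.le
  have hcard : ((Ico (u n) (v n)).card : ℝ) ≤ v n := by
    rw [Nat.card_Ico]; exact_mod_cast Nat.sub_le _ _
  rw [dist_zero_right, Real.norm_eq_abs]
  calc |∑ k ∈ Ico (u n) (v n), g k| ≤ ∑ k ∈ Ico (u n) (v n), |g k| := abs_sum_le_sum_abs _ _
    _ ≤ (Ico (u n) (v n)).card * (δ / u n) := by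
        simpa using sum_le_card_nsmul _ _ _ hterm
    _ ≤ c * u n * (δ / u n) := by gcongr; exact hcard.trans hvn
    _ = c * δ := by field_simp
    _ ≤ |c| * δ := by gcongr; exact le_abs_self c
    _ < (|c| + 1) * δ := by linarith
    _ = ε := mul_div_cancel₀ ε (by positivity)

lemma sum_Ico_sub_sum_Ico {M : Type*} [AddCommGroup M] (g : ℕ → M) {a b c : ℕ} (hb : a ≤ b)
    (hc : a ≤ c) :
    ∑ k ∈ Ico a c, g k - ∑ k ∈ Ico a b, g k = ∑ k ∈ Ico b c, g k - ∑ k ∈ Ico c b, g k := by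
  rcases le_total b c with hbc | hcb
  · rw [← sum_Ico_consecutive g hb hbc, Ico_eq_empty_of_le hbc, sum_empty]
    abel
  · rw [← sum_Ico_consecutive g hc hcb, Ico_eq_empty_of_le hcb, sum_empty]
    abel

lemma tendsto_natFloor_mul_atTop {t : ℝ} (ht : 0 < t) :
    Tendsto (fun n : ℕ => ⌊n * t⌋₊) atTop atTop :=
  tendsto_nat_floor_atTop.comp (tendsto_natCast_atTop_atTop.atTop_mul_const ht)

theorem isEquivalent_prod_Ico_natFloor_mul {f : ℕ → ℝ} (hf : ∀ k, 1 ≤ k → 0 < f k)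
    (h : Tendsto (fun k : ℕ => k * (f k - 1)) atTop (𝓝 0)) {t : ℝ} (ht : 0 < t) :
    (fun n : ℕ => ∏ k ∈ Ico 1 ⌊n * t⌋₊, f k) ~[atTop] fun n => ∏ k ∈ Ico 1 n, f k := by
  have hlog := tendsto_mul_log_of_tendsto_mul_sub_one (eventually_atTop.2 ⟨1, hf⟩) h
  have hnt := tendsto_natCast_atTop_atTop.atTop_mul_const ht
  have hup := tendsto_sum_Ico_of_tendsto_mul hlog tendsto_id (c := t) (v := fun n => ⌊n * t⌋₊)
    (Eventually.of_forall fun n => (Nat.floor_le (by positivity)).trans_eq (mul_comm _ _))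
  have hdown := tendsto_sum_Ico_of_tendsto_mul hlog (tendsto_natFloor_mul_atTop ht) (c := 2 / t)
    (v := id) <| by
      filter_upwards [(tendsto_nat_floor_div_atTop.comp hnt).eventually
        (eventually_gt_nhds one_half_lt_one), eventually_gt_atTop 0] with n hm hn
      have hn : (0 : ℝ) < n * t := by positivity
      rw [Function.comp_apply, lt_div_iff₀ hn] at hm
      rw [id, div_mul_eq_mul_div, le_div_iff₀ ht]
      linarith
  refine isEquivalent_of_tendsto_one ?_
  have hdiff := hup.sub hdown
  rw [sub_zero] at hdiff
  have hexp := (continuous_exp.tendsto 0).comp hdiff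
  rw [exp_zero] at hexp
  refine hexp.congr' ?_
  filter_upwards [eventually_ge_atTop 1, (tendsto_natFloor_mul_atTop ht).eventually_ge_atTop 1]
    with n hn hm
  have hprod : ∀ N, ∏ k ∈ Ico 1 N, f k = exp (∑ k ∈ Ico 1 N, log (f k)) := fun N => by
    rw [exp_sum]
    exact prod_congr rfl fun k hk => (exp_log (hf k (mem_Ico.1 hk).1)).symm
  simp only [Pi.div_apply, hprod, ← exp_sub, sum_Ico_sub_sum_Ico _ hn hm]
  rfl

lemma isEquivalent_natFloor_mul_rpow {t : ℝ} (ht : 0 < t) (r : ℝ) :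
    (fun n : ℕ => (⌊n * t⌋₊ : ℝ) ^ r) ~[atTop] fun n => (n : ℝ) ^ r * t ^ r := by
  have hfloor : (fun n : ℕ => (⌊n * t⌋₊ : ℝ)) ~[atTop] fun n => (n : ℝ) * t :=
    isEquivalent_of_tendsto_one
      (tendsto_nat_floor_div_atTop.comp (tendsto_natCast_atTop_atTop.atTop_mul_const ht))
  refine (hfloor.rpow (fun n => by positivity)).congr_right (Eventually.of_forall fun n => ?_)
  exact mul_rpow n.cast_nonneg ht.le

theorem isEquivalent_prod_Ico_natFloor_mul_one_add_div_mul {γ : ℝ} (hγ : -1 < γ) {f : ℕ → ℝ}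
    (hf : ∀ k, 1 ≤ k → 0 < f k) (h : Tendsto (fun k : ℕ => k * (f k - 1)) atTop (𝓝 0))
    {t : ℝ} (ht : 0 < t) :
    (fun n : ℕ => ∏ k ∈ Ico 1 ⌊n * t⌋₊, (1 + γ / k) * f k) ~[atTop]
      fun n => (n : ℝ) ^ γ * t ^ γ / Gamma (γ + 1) * ∏ k ∈ Ico 1 n, f k := by
  simp only [prod_mul_distrib]
  refine IsEquivalent.mul ?_ (isEquivalent_prod_Ico_natFloor_mul hf h ht)
  exact ((isEquivalent_prod_Ico_one_add_div hγ).comp_tendsto (tendsto_natFloor_mul_atTop ht)).trans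
    ((isEquivalent_natFloor_mul_rpow ht γ).div IsEquivalent.refl)

lemma isEquivalent_sqrt_of_tendsto_sq_div {ι : Type*} {l : Filter ι} {u D : ι → ℝ} (hu : 0 ≤ u)
    (h : Tendsto (fun x => u x ^ 2 / D x) l (𝓝 1)) : u ~[l] fun x => √(D x) := by
  have := ((isEquivalent_of_tendsto_one h).symm.rpow (fun x => sq_nonneg (u x)) (r := 1 / 2)).symm
  refine (this.congr_left (Eventually.of_forall fun x => ?_)).congr_right
    (Eventually.of_forall fun x => (sqrt_eq_rpow (D x)).symm)
  change (u x ^ 2) ^ (1 / 2 : ℝ) = u x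
  rw [← sqrt_eq_rpow, sqrt_sq (hu x)]

lemma rpow_mul_sqrt_rpow_one_sub_two_mul {x : ℝ} (hx : 0 ≤ x) (γ : ℝ) :
    x ^ γ * √(x ^ (1 - 2 * γ)) = √x := by
  rw [sqrt_eq_rpow, sqrt_eq_rpow, ← rpow_mul hx, ← rpow_add' hx] <;> ring_nf
  norm_num

lemma rpow_mul_div_mul_mul_sqrt {x s G L γ : ℝ} (C : ℝ) (hx : 0 ≤ x) (hG : 0 < G) (hL : 0 < L) :
    x ^ γ * s / G * L * √(C * G ^ 2 * x ^ (1 - 2 * γ) * L⁻¹ ^ 2) = √C * s * √x := by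
  rw [sqrt_mul' _ (by positivity), sqrt_mul' _ (by positivity), sqrt_mul' _ (by positivity),
    sqrt_sq hG.le, sqrt_sq (by positivity), ← rpow_mul_sqrt_rpow_one_sub_two_mul hx γ]
  field_simp

lemma Icc_one_sub_one_eq_Ico (n : ℕ) : Icc 1 (n - 1) = Ico 1 n := by
  ext k
  simp only [mem_Icc, mem_Ico]
  omega

lemma ne_zero_of_eventually_prod_Ico_ne_zero {M : Type*} [CommMonoidWithZero M] {f : ℕ → M}
    (h : ∀ᶠ n in atTop, ∏ k ∈ Ico 1 n, f k ≠ 0) {k : ℕ} (hk : 1 ≤ k) : f k ≠ 0 := by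
  obtain ⟨n, hn, hkn⟩ := (h.and (eventually_gt_atTop k)).exists
  exact fun hfk => hn (prod_eq_zero (mem_Ico.2 ⟨hk, hkn⟩) hfk)

lemma natCast_add_pos_of_neg_one_lt {c : ℝ} (hc : -1 < c) {k : ℕ} (hk : 1 ≤ k) :
    0 < (k : ℝ) + c := by
  have : (1 : ℝ) ≤ k := by exact_mod_cast hk
  linarith

lemma one_add_mul_div_eq_mul {x c α β : ℝ} (hx : x ≠ 0) (hxα : x + c * α ≠ 0) :
    1 + c * β / x = (1 + α * c / x) * (1 + c * (β - α) / (x + c * α)) := by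
  field_simp
  ring

lemma one_add_mul_sub_div_nonneg {x c α β : ℝ} (hx : 1 ≤ x) (hc : -1 ≤ c) (hβ : β ∈ Set.Icc 0 1)
    (hxα : 0 < x + c * α) : 0 ≤ 1 + c * (β - α) / (x + c * α) := by
  rw [one_add_div hxα.ne']
  refine div_nonneg ?_ hxα.le
  nlinarith [hβ.1, hβ.2]

lemma tendsto_mul_one_add_mul_sub_div_sub_one {β : ℕ → ℝ} {α : ℝ} (hβ : Tendsto β atTop (𝓝 α))
    (c : ℝ) : Tendsto (fun k : ℕ => k * ((1 + c * (β k - α) / (k + c * α)) - 1)) atTop (𝓝 0) := by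
  have hβα : Tendsto (fun k => c * (β k - α)) atTop (𝓝 0) := by
    simpa using (hβ.sub_const α).const_mul c
  have := (tendsto_natCast_div_add_atTop (c * α)).mul hβα
  rw [one_mul] at this
  refine this.congr fun k => ?_
  ring

theorem isEquivalent_prod_Icc_natFloor_mul_sub_one {c α : ℝ} {αs : ℕ → ℝ} (hαc : -1 < α * c)
    (hf : ∀ k, 1 ≤ k → 0 < 1 + c * (αs (k + 1) - α) / ((k : ℝ) + c * α))
    (hαs : Tendsto αs atTop (𝓝 α)) {t : ℝ} (ht : 0 < t) :
    (fun n : ℕ => ∏ k ∈ Icc 1 (⌊n * t⌋₊ - 1), (1 + c * αs (k + 1) / k)) ~[atTop]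
      fun n => (n : ℝ) ^ (α * c) * t ^ (α * c) / Gamma (α * c + 1) *
        ∏ k ∈ Icc 1 (n - 1), (1 + c * (αs (k + 1) - α) / ((k : ℝ) + c * α)) := by
  have hprod : ∀ n, ∏ k ∈ Ico 1 n, (1 + c * αs (k + 1) / k) =
      ∏ k ∈ Ico 1 n, (1 + α * c / k) * (1 + c * (αs (k + 1) - α) / ((k : ℝ) + c * α)) :=
    fun n => prod_congr rfl fun k hk => one_add_mul_div_eq_mul
      (Nat.cast_ne_zero.2 (by have := (mem_Ico.1 hk).1; omega))
      (natCast_add_pos_of_neg_one_lt (by linarith [mul_comm α c]) (mem_Ico.1 hk).1).ne'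
  simp only [Icc_one_sub_one_eq_Ico, hprod]
  exact isEquivalent_prod_Ico_natFloor_mul_one_add_div_mul hαc hf
    (tendsto_mul_one_add_mul_sub_div_sub_one (hαs.comp (tendsto_add_atTop_nat 1)) c) ht

theorem stmt_19_general (p α : ℝ) (hp : p ∈ Set.Icc (0:ℝ) 1) (hα : α ∈ Set.Icc (0:ℝ) 1)
    (αs : ℕ → ℝ) (hαs : ∀ k, αs k ∈ Set.Icc (0:ℝ) 1)
    (hαconv : Tendsto αs atTop (nhds α))
    (a ℓ : ℕ → ℝ)
    (ha : ∀ n, a n = ∏ k ∈ Finset.Icc 1 (n-1), (1 + (2*p-1) * αs (k+1) / (k:ℝ)))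
    (hℓ : ∀ n, ℓ n = ∏ k ∈ Finset.Icc 1 (n-1),
      (1 + (2*p-1) * (αs (k+1) - α) / ((k:ℝ) + (2*p-1)*α)))
    (A : ℕ → ℝ) (hApos : ∀ n, 0 ≤ A n)
    (C : ℝ) (hC : 0 < C)
    (hA : Tendsto (fun n : ℕ =>
        (A n)^2 / (C * (Real.Gamma (α*(2*p-1) + 1))^2 *
          (n:ℝ) ^ (1 - 2*α*(2*p-1)) * (ℓ n)⁻¹^2))
      atTop (nhds 1)) :
    ∀ t > (0:ℝ), Tendsto (fun n : ℕ =>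
        a ⌊(n:ℝ)*t⌋₊ * A n / (Real.sqrt C * t ^ (α*(2*p-1)) * Real.sqrt n))
      atTop (nhds 1) := by
  intro t ht
  set γ := α * (2 * p - 1)
  -- `hA` rules out the degenerate cases `Γ(γ + 1) = 0` and `ℓ n = 0`, where its quotient is `0`.
  have hnondeg : ∀ᶠ n in atTop, Gamma (γ + 1) ≠ 0 ∧ ℓ n ≠ 0 :=
    (hA.eventually_ne one_ne_zero).mono fun n hn => by
      constructor <;> rintro h0 <;> simp [h0] at hn
  have hγ : -1 < γ := by
    obtain ⟨n, hΓ, -⟩ := hnondeg.exists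
    refine (show -1 ≤ γ by nlinarith [hp.1, hp.2, hα.1, hα.2]).lt_of_ne fun h => hΓ ?_
    rw [← h, neg_add_cancel, Gamma_zero]
  have hf : ∀ k, 1 ≤ k → 0 < 1 + (2 * p - 1) * (αs (k + 1) - α) / ((k : ℝ) + (2 * p - 1) * α) :=
    fun k hk => (one_add_mul_sub_div_nonneg (by exact_mod_cast hk) (by linarith [hp.1])
      (hαs (k + 1)) (natCast_add_pos_of_neg_one_lt (by linarith [mul_comm α (2 * p - 1)]) hk)
      ).lt_of_ne' <| ne_zero_of_eventually_prod_Ico_ne_zero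
        (hnondeg.mono fun n hn => by rw [← Icc_one_sub_one_eq_Ico, ← hℓ]; exact hn.2) hk
  have hℓpos : ∀ n, 0 < ℓ n := fun n => hℓ n ▸ prod_pos fun k hk => hf k (mem_Icc.1 hk).1
  have hreg := isEquivalent_prod_Icc_natFloor_mul_sub_one hγ hf hαconv ht
  refine (isEquivalent_iff_tendsto_one ?_).1 (((hreg.mul
    (isEquivalent_sqrt_of_tendsto_sq_div hApos hA)).congr_left ?_).congr_right ?_)
  · filter_upwards [eventually_gt_atTop 0] with n hn
    positivity
  · exact Eventually.of_forall fun n => by simp only [Pi.mul_apply, ha]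
  · refine Eventually.of_forall fun n => ?_
    simp only [Pi.mul_apply, ← hℓ, show 1 - 2 * α * (2 * p - 1) = 1 - 2 * γ by ring]
    exact rpow_mul_div_mul_mul_sqrt C n.cast_nonneg (Gamma_pos_of_pos (by linarith)) (hℓpos n)

/-- a_{⌊nt⌋} A_n ∼ √C t^{α(2p-1)} √n. -/
theorem stmt_19 (p α : ℝ) (hp : p ∈ Set.Icc (0:ℝ) 1) (hα : α ∈ Set.Icc (0:ℝ) 1)
    (hcrit : α * (2*p-1) < 1/2)
    (αs : ℕ → ℝ) (hαs : ∀ k, αs k ∈ Set.Icc (0:ℝ) 1)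
    (hαconv : Tendsto αs atTop (nhds α))
    (a ℓ : ℕ → ℝ)
    (ha : ∀ n, a n = ∏ k ∈ Finset.Icc 1 (n-1), (1 + (2*p-1) * αs (k+1) / (k:ℝ)))
    (hℓ : ∀ n, ℓ n = ∏ k ∈ Finset.Icc 1 (n-1),
      (1 + (2*p-1) * (αs (k+1) - α) / ((k:ℝ) + (2*p-1)*α)))
    (A : ℕ → ℝ) (hApos : ∀ n, 0 ≤ A n)
    (C : ℝ) (hC : 0 < C)
    (hA : Tendsto (fun n : ℕ =>
        (A n)^2 / (C * (Real.Gamma (α*(2*p-1) + 1))^2 *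
          (n:ℝ) ^ (1 - 2*α*(2*p-1)) * (ℓ n)⁻¹^2))
      atTop (nhds 1)) :
    ∀ t > (0:ℝ), Tendsto (fun n : ℕ =>
        a ⌊(n:ℝ)*t⌋₊ * A n / (Real.sqrt C * t ^ (α*(2*p-1)) * Real.sqrt n))
      atTop (nhds 1) :=
  stmt_19_general p α hp hα αs hαs hαconv a ℓ ha hℓ A hApos C hC hA
end
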